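/- arXiv:1811.03684 — 2 statements merged into one kernel-verified Lean document; each statement's English description precedes it below -/
import Mathlib

section
/- Let (Ω, F, P) be a probability space, {Θ_y : y ∈ Y} a family of P-preserving measurable bijections of Ω, Q a probability measure on Y, and G : Ω → ℝ≥0 jointly measurable with y. Let ω ~ P and Y ~ Q be independent, and set Ẑ¹ := G(Θ_Y(ω)) and Ẑ² := ∫ G(Θ_y(ω)) Q(dy). Then Ẑ¹ has the same distribution as G(ω) under P, Ẑ² is σ(ω)-measurable, and Ẑ² = E[Ẑ¹ | σ(ω)] almost surely; consequently Ẑ² = E[Ẑ¹ | Ẑ²]. -/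
/-!
Each section `ω ↦ G (Θ y ω)` has the law of `G` because `Θ y` preserves `P`, so averaging over
`y ~ Q` does not change the law of `Ẑ¹`. On a product measure, conditioning on the `ω`-coordinate
integrates out the `y`-coordinate: on the generating sets `Y × t` of `σ(ω)` this is Fubini. This
identifies `Ẑ²` with `E[Ẑ¹ | σ(ω)]`; as `Ẑ²` is `σ(ω)`-measurable, `σ(Ẑ²) ≤ σ(ω)` and the tower
property gives `Ẑ² = E[Ẑ¹ | Ẑ²]`.
-/

open MeasureTheory

section Product

variable {Ω Y : Type*} [MeasurableSpace Ω] [MeasurableSpace Y]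
  (Q : Measure Y) [IsProbabilityMeasure Q]

theorem map_prod_eq_of_forall_map_eq {β : Type*} [MeasurableSpace β] (μ : Measure Ω) [SFinite μ]
    {F : Y × Ω → β} (hF : Measurable F) {ν : Measure β}
    (h : ∀ y, μ.map (fun ω => F (y, ω)) = ν) :
    (Q.prod μ).map F = ν := by
  ext s hs
  have hsection : ∀ y, μ (Prod.mk y ⁻¹' (F ⁻¹' s)) = ν s := fun y => by
    rw [← h y, Measure.map_apply (f := fun ω => F (y, ω)) (hF.comp measurable_prodMk_left) hs]
    rfl
  simp [Measure.map_apply hF hs, Measure.prod_apply (hF hs), hsection]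

theorem condExp_comap_snd_ae_eq_integral {E : Type*} [NormedAddCommGroup E] [NormedSpace ℝ E]
    [CompleteSpace E] (μ : Measure Ω) [IsFiniteMeasure μ] {F : Y × Ω → E}
    (hF : Integrable F (Q.prod μ)) :
    (Q.prod μ)[F | MeasurableSpace.comap Prod.snd inferInstance] =ᵐ[Q.prod μ]
      fun p => ∫ y, F (y, p.2) ∂Q := by
  set g : Ω → E := fun ω => ∫ y, F (y, ω) ∂Q
  have hg : Integrable g μ := hF.integral_prod_right
  have hsnd : MeasurePreserving Prod.snd (Q.prod μ) μ := measurePreserving_snd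
  have hgsnd : AEStronglyMeasurable[MeasurableSpace.comap Prod.snd inferInstance]
      (g ∘ Prod.snd) (Q.prod μ) := by
    obtain ⟨g', hg'm, hgg'⟩ := hg.aestronglyMeasurable
    exact ⟨g' ∘ Prod.snd, hg'm.comp_measurable (comap_measurable _),
      ae_eq_comp measurable_snd.aemeasurable (hsnd.map_eq.symm ▸ hgg')⟩
  refine (ae_eq_condExp_of_forall_setIntegral_eq measurable_snd.comap_le hF
    (fun s _ _ => (hsnd.integrable_comp_of_integrable hg).integrableOn)
    (fun s hs _ => ?_) hgsnd).symm
  obtain ⟨t, -, rfl⟩ := hs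
  have hrestrict : (Q.prod μ).restrict (Prod.snd ⁻¹' t) = Q.prod (μ.restrict t) := by
    rw [← Set.univ_prod, ← Measure.prod_restrict, Measure.restrict_univ]
  change ∫ p : Y × Ω in _, g p.2 ∂(Q.prod μ) = _
  rw [hrestrict, integral_fun_snd, probReal_univ, one_smul,
    integral_prod_symm F (hrestrict ▸ hF.restrict)]

end Product

theorem ae_eq_condExp_comap_of_ae_eq_condExp {α E : Type*} [NormedAddCommGroup E]
    [NormedSpace ℝ E] [CompleteSpace E] [MeasurableSpace E] [BorelSpace E]
    [SecondCountableTopology E] {m m₀ : MeasurableSpace α} {μ : Measure α} [IsFiniteMeasure μ]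
    {X Z : α → E} (hm : m ≤ m₀) (hZ : Measurable[m] Z) (hZX : Z =ᵐ[μ] μ[X | m]) :
    Z =ᵐ[μ] μ[X | MeasurableSpace.comap Z inferInstance] := by
  have hZm : MeasurableSpace.comap Z inferInstance ≤ m := hZ.comap_le
  have hZint : Integrable Z μ := integrable_condExp.congr hZX.symm
  calc Z = μ[Z | MeasurableSpace.comap Z inferInstance] :=
        (condExp_of_stronglyMeasurable (hZm.trans hm)
          (comap_measurable Z).stronglyMeasurable hZint).symm
    _ =ᵐ[μ] μ[μ[X | m] | MeasurableSpace.comap Z inferInstance] := condExp_congr_ae hZX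
    _ =ᵐ[μ] μ[X | MeasurableSpace.comap Z inferInstance] := condExp_condExp_of_le hZm hm

theorem stmt7_general {Ω Y : Type*} [MeasurableSpace Ω] [MeasurableSpace Y]
    (μ : Measure Ω) [IsProbabilityMeasure μ]
    (Q : Measure Y) [IsProbabilityMeasure Q]
    (Θ : Y → Ω → Ω) (hΘ : ∀ y, MeasurePreserving (Θ y) μ μ)
    (G : Ω → ℝ) (hGmeas : Measurable G)
    (hjoint : Measurable (fun p : Y × Ω => G (Θ p.1 p.2)))
    (hint : Integrable (fun p : Y × Ω => G (Θ p.1 p.2)) (Q.prod μ)) :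
    Measure.map (fun p : Y × Ω => G (Θ p.1 p.2)) (Q.prod μ) = Measure.map G μ ∧
      Measurable[MeasurableSpace.comap (Prod.snd : Y × Ω → Ω) inferInstance]
        (fun p : Y × Ω => ∫ y, G (Θ y p.2) ∂Q) ∧
      (fun p : Y × Ω => ∫ y, G (Θ y p.2) ∂Q) =ᵐ[Q.prod μ]
        (Q.prod μ)[fun p : Y × Ω => G (Θ p.1 p.2) |
          MeasurableSpace.comap (Prod.snd : Y × Ω → Ω) inferInstance] ∧
      (fun p : Y × Ω => ∫ y, G (Θ y p.2) ∂Q) =ᵐ[Q.prod μ]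
        (Q.prod μ)[fun p : Y × Ω => G (Θ p.1 p.2) |
          MeasurableSpace.comap (fun p : Y × Ω => ∫ y, G (Θ y p.2) ∂Q) (borel ℝ)] := by
  have hlaw : ∀ y, μ.map (fun ω => G (Θ y ω)) = μ.map G := fun y => by
    rw [← Function.comp_def, ← Measure.map_map hGmeas (hΘ y).measurable, (hΘ y).map_eq]
  have hZ₂ : Measurable[MeasurableSpace.comap (Prod.snd : Y × Ω → Ω) inferInstance]
      (fun p : Y × Ω => ∫ y, G (Θ y p.2) ∂Q) :=
    hjoint.stronglyMeasurable.integral_prod_left'.measurable.comp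
      (comap_measurable Prod.snd)
  have hcond := (condExp_comap_snd_ae_eq_integral Q μ hint).symm
  exact ⟨map_prod_eq_of_forall_map_eq Q μ hjoint hlaw, hZ₂, hcond,
    ae_eq_condExp_comap_of_ae_eq_condExp measurable_snd.comap_le hZ₂ hcond⟩

/-- The coupling construction of Theorem 3.1: with `ω ~ P` and `Y ~ Q` independent
(realized on the product space `Y × Ω`), `Ẑ¹ := G(Θ_Y(ω))` has the law of `G(ω)`,
`Ẑ² := ∫ G(Θ_y(ω)) Q(dy)` is `σ(ω)`-measurable, `Ẑ² = E[Ẑ¹ | σ(ω)]` a.s., and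
consequently `Ẑ² = E[Ẑ¹ | Ẑ²]` a.s. -/
theorem stmt7 {Ω Y : Type*} [MeasurableSpace Ω] [MeasurableSpace Y]
    (μ : Measure Ω) [IsProbabilityMeasure μ]
    (Q : Measure Y) [IsProbabilityMeasure Q] [SFinite Q]
    (Θ : Y → Ω → Ω) (hΘ : ∀ y, MeasurePreserving (Θ y) μ μ)
    (hΘbij : ∀ y, Function.Bijective (Θ y))
    (G : Ω → ℝ) (hGnn : ∀ ω, 0 ≤ G ω) (hGmeas : Measurable G)
    (hjoint : Measurable (fun p : Y × Ω => G (Θ p.1 p.2)))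
    (hint : Integrable (fun p : Y × Ω => G (Θ p.1 p.2)) (Q.prod μ)) :
    Measure.map (fun p : Y × Ω => G (Θ p.1 p.2)) (Q.prod μ) = Measure.map G μ ∧
      Measurable[MeasurableSpace.comap (Prod.snd : Y × Ω → Ω) inferInstance]
        (fun p : Y × Ω => ∫ y, G (Θ y p.2) ∂Q) ∧
      (fun p : Y × Ω => ∫ y, G (Θ y p.2) ∂Q) =ᵐ[Q.prod μ]
        (Q.prod μ)[fun p : Y × Ω => G (Θ p.1 p.2) |
          MeasurableSpace.comap (Prod.snd : Y × Ω → Ω) inferInstance] ∧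
      (fun p : Y × Ω => ∫ y, G (Θ y p.2) ∂Q) =ᵐ[Q.prod μ]
        (Q.prod μ)[fun p : Y × Ω => G (Θ p.1 p.2) |
          MeasurableSpace.comap (fun p : Y × Ω => ∫ y, G (Θ y p.2) ∂Q) (borel ℝ)] :=
  stmt7_general μ Q Θ hΘ G hGmeas hjoint hint
end

section
/- Let S_n act on the columns-closed matrix setting of the tree model: for each permutation π of {1,…,K} and each a ∈ {1,…,K}, suppose Ŵ(a, ω(π)) = Ŵ(π⁻¹(a), ω). Define for probability vectors p, q on {1,…,K}: c(π) := ∑_a p(a) Ŵ(a, ω(π)) and d(π) := ∑_a q(a) Ŵ(a, ω(π)), viewed as vectors indexed by permutations π ∈ S_K. If p ⪯_M q then c ⪯_M d. -/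
open MeasureTheory Finset

/-- `topSum p k` is the sum of the `k` largest entries of the vector `p`
(the largest sum over index sets of cardinality `k`). -/
noncomputable def topSum {ι : Type*} [Fintype ι] (p : ι → ℝ) (k : ℕ) : ℝ :=
  sSup {s : ℝ | ∃ A : Finset ι, A.card = k ∧ s = ∑ i ∈ A, p i}

/-- `MajorizedBy p q` : for every `k`, the sum of the `k` largest entries of `p` is at most
that of `q`. Together with equality of total sums this is the majorization order `p ⪯_M q`. -/
def MajorizedBy {ι κ : Type*} [Fintype ι] [Fintype κ] (p : ι → ℝ) (q : κ → ℝ) : Prop :=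
  ∀ k : ℕ, topSum p k ≤ topSum q k

/-!
Fix a `k`-set `A` of permutations and put `f a = ∑_{π ∈ A} W a π`; then
`∑_{π ∈ A} ∑_a p a * W a π = ∑_a p a * f a`. Sorting `f` decreasingly and summing by parts,
the weak majorization `p ≺ q` together with `∑ p = ∑ q` gives `∑_a p a * f a ≤ ∑_a q a * f (σ a)`
for a permutation `σ` that matches the decreasing orders of `q` and `f`. By equivariance,
`f (σ a) = ∑_{π ∈ σ⁻¹ A} W a π`, so the right-hand side is the sum of
`π ↦ ∑_a q a * W a π` over the `k`-set `σ⁻¹ A`, hence at most its top-`k` sum.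
-/

section TopSum

variable {ι : Type*} [Fintype ι] (p : ι → ℝ)

lemma bddAbove_topSum_set (k : ℕ) :
    BddAbove {s : ℝ | ∃ A : Finset ι, A.card = k ∧ s = ∑ i ∈ A, p i} :=
  ((Set.finite_range fun A : Finset ι => ∑ i ∈ A, p i).subset
    (by rintro s ⟨A, -, rfl⟩; exact ⟨A, rfl⟩)).bddAbove

lemma le_topSum {k : ℕ} {A : Finset ι} (hA : A.card = k) : ∑ i ∈ A, p i ≤ topSum p k :=
  le_csSup (bddAbove_topSum_set p k) ⟨A, hA, rfl⟩

lemma topSum_le {k : ℕ} (hk : k ≤ Fintype.card ι) {M : ℝ}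
    (h : ∀ A : Finset ι, A.card = k → ∑ i ∈ A, p i ≤ M) : topSum p k ≤ M := by
  obtain ⟨A, -, hA⟩ := exists_subset_card_eq (s := (univ : Finset ι)) (by simpa using hk)
  exact csSup_le ⟨_, A, hA, rfl⟩ (by rintro s ⟨A, hA, rfl⟩; exact h A hA)

lemma topSum_eq_zero_of_card_lt {k : ℕ} (hk : Fintype.card ι < k) : topSum p k = 0 := by
  have hempty : {s : ℝ | ∃ A : Finset ι, A.card = k ∧ s = ∑ i ∈ A, p i} = ∅ :=
    Set.eq_empty_of_forall_notMem fun s ⟨A, hA, _⟩ => (card_le_univ A).not_gt (hA ▸ hk)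
  rw [topSum, hempty, Real.sSup_empty]

end TopSum

lemma Fin.val_le_val_of_strictMono {m n : ℕ} {e : Fin m → Fin n} (he : StrictMono e)
    (i : Fin m) : (i : ℕ) ≤ e i :=
  calc (i : ℕ) = #(Iio i) := (Fin.card_Iio i).symm
    _ ≤ #(Iio (e i)) := card_le_card_of_injOn e (fun j hj => by simpa using he (by simpa using hj))
        he.injective.injOn
    _ = e i := Fin.card_Iio _

lemma Antitone.sum_le_sum_castLE {m n : ℕ} {v : Fin n → ℝ} (hv : Antitone v) (hm : m ≤ n)
    {B : Finset (Fin n)} (hB : #B = m) : ∑ i ∈ B, v i ≤ ∑ i : Fin m, v (Fin.castLE hm i) := by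
  rw [← B.map_orderEmbOfFin_univ hB, sum_map]
  exact sum_le_sum fun i _ => hv (Fin.val_le_val_of_strictMono (B.orderEmbOfFin hB).strictMono i)

lemma sum_castLE_le_topSum {m n : ℕ} (p : Fin n → ℝ) (σ : Equiv.Perm (Fin n)) (hm : m ≤ n) :
    ∑ i : Fin m, p (σ (Fin.castLE hm i)) ≤ topSum p m := by
  have hcard : #((univ.map (Fin.castLEEmb hm)).map σ.toEmbedding) = m := by simp
  simpa using le_topSum p hcard

lemma topSum_eq_sum_castLE {m n : ℕ} {p : Fin n → ℝ} {σ : Equiv.Perm (Fin n)}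
    (hσ : Antitone (p ∘ σ)) (hm : m ≤ n) :
    topSum p m = ∑ i : Fin m, p (σ (Fin.castLE hm i)) := by
  refine le_antisymm (topSum_le p (by simpa using hm) fun A hA => ?_)
    (sum_castLE_le_topSum p σ hm)
  calc ∑ i ∈ A, p i = ∑ i ∈ A.map σ.symm.toEmbedding, (p ∘ σ) i := by simp [sum_map]
    _ ≤ _ := hσ.sum_le_sum_castLE hm (by simpa using hA)

lemma sum_range_mul_le_sum_range_mul {g x y : ℕ → ℝ} {n : ℕ} (hg : AntitoneOn g (Set.Iio n))
    (hpart : ∀ m < n, ∑ i ∈ range m, x i ≤ ∑ i ∈ range m, y i)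
    (htot : ∑ i ∈ range n, x i = ∑ i ∈ range n, y i) :
    ∑ i ∈ range n, g i * x i ≤ ∑ i ∈ range n, g i * y i := by
  simp only [← smul_eq_mul]
  rw [sum_range_by_parts g x, sum_range_by_parts g y, htot]
  apply sub_le_sub_left
  refine sum_le_sum fun i hi => ?_
  rw [mem_range] at hi
  have hdec : g (i + 1) - g i ≤ 0 :=
    sub_nonpos.2 (hg (Set.mem_Iio.2 (by omega)) (Set.mem_Iio.2 (by omega)) (by omega))
  exact smul_le_smul_of_nonpos_left (hpart _ (by omega)) hdec

lemma Antitone.sum_mul_le_sum_mul_of_sum_castLE_le {n : ℕ} {g x y : Fin n → ℝ}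
    (hg : Antitone g)
    (hpart : ∀ m (hm : m ≤ n), ∑ i : Fin m, x (Fin.castLE hm i) ≤ ∑ i : Fin m, y (Fin.castLE hm i))
    (htot : ∑ i, x i = ∑ i, y i) :
    ∑ i, g i * x i ≤ ∑ i, g i * y i := by
  let e (v : Fin n → ℝ) : ℕ → ℝ := Function.extend Fin.val v 0
  have he (v : Fin n → ℝ) (i : Fin n) : e v i = v i := Fin.val_injective.extend_apply v 0 i
  have hsum (v : Fin n → ℝ) (m : ℕ) (hm : m ≤ n) :
      ∑ i ∈ range m, e v i = ∑ i : Fin m, v (Fin.castLE hm i) := by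
    rw [← Fin.sum_univ_eq_sum_range]
    exact sum_congr rfl fun i _ => he v (Fin.castLE hm i)
  have hmul (v : Fin n → ℝ) : ∑ i, g i * v i = ∑ i ∈ range n, e g i * e v i := by
    rw [← Fin.sum_univ_eq_sum_range (fun i => e g i * e v i)]
    simp only [he]
  rw [hmul, hmul]
  refine sum_range_mul_le_sum_range_mul ?_ (fun m hm => ?_) ?_
  · intro i hi j hj hij
    exact (he g ⟨j, hj⟩).trans_le ((hg hij).trans_eq (he g ⟨i, hi⟩).symm)
  · simpa only [hsum _ m hm.le] using hpart m hm.le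
  · rw [hsum x n le_rfl, hsum y n le_rfl]
    exact htot

lemma exists_perm_antitone_comp {α : Type*} [LinearOrder α] {n : ℕ} (v : Fin n → α) :
    ∃ σ : Equiv.Perm (Fin n), Antitone (v ∘ σ) :=
  ⟨Tuple.sort (OrderDual.toDual ∘ v), monotone_toDual_comp_iff.1 (Tuple.monotone_sort _)⟩

theorem exists_perm_sum_mul_le_of_majorizedBy {n : ℕ} {p q : Fin n → ℝ} (hmaj : MajorizedBy p q)
    (hsum : ∑ i, p i = ∑ i, q i) (f : Fin n → ℝ) :
    ∃ σ : Equiv.Perm (Fin n), ∑ i, p i * f i ≤ ∑ i, q i * f (σ i) := by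
  obtain ⟨σf, hf⟩ := exists_perm_antitone_comp f
  obtain ⟨σq, hq⟩ := exists_perm_antitone_comp q
  have hpart (m : ℕ) (hm : m ≤ n) :
      ∑ i : Fin m, p (σf (Fin.castLE hm i)) ≤ ∑ i : Fin m, q (σq (Fin.castLE hm i)) :=
    calc _ ≤ topSum p m := sum_castLE_le_topSum p σf hm
      _ ≤ topSum q m := hmaj m
      _ = _ := topSum_eq_sum_castLE hq hm
  have htot : ∑ i, p (σf i) = ∑ i, q (σq i) := by rw [Equiv.sum_comp, Equiv.sum_comp, hsum]
  refine ⟨σf * σq⁻¹, ?_⟩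
  calc ∑ i, p i * f i = ∑ i, f (σf i) * p (σf i) := by
        rw [← Equiv.sum_comp σf]; simp only [mul_comm]
    _ ≤ ∑ i, f (σf i) * q (σq i) := hf.sum_mul_le_sum_mul_of_sum_castLE_le hpart htot
    _ = ∑ i, q i * f ((σf * σq⁻¹) i) := by
        rw [← Equiv.sum_comp σq (fun i => q i * f ((σf * σq⁻¹) i))]
        simp [mul_comm]

theorem stmt18_general {K : ℕ} (W : Fin K → Equiv.Perm (Fin K) → ℝ)
    (hEquiv : ∀ (a : Fin K) (σ π : Equiv.Perm (Fin K)), W (σ a) π = W a (σ⁻¹ * π))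
    (p q : Fin K → ℝ)
    (hps : ∑ a, p a = 1) (hqs : ∑ a, q a = 1)
    (hmaj : MajorizedBy p q) :
    MajorizedBy (fun π : Equiv.Perm (Fin K) => ∑ a, p a * W a π)
      (fun π : Equiv.Perm (Fin K) => ∑ a, q a * W a π) := by
  intro k
  rcases lt_or_ge (Fintype.card (Equiv.Perm (Fin K))) k with hk | hk
  · rw [topSum_eq_zero_of_card_lt _ hk, topSum_eq_zero_of_card_lt _ hk]
  refine topSum_le _ hk fun A hA => ?_
  obtain ⟨σ, hσ⟩ := exists_perm_sum_mul_le_of_majorizedBy hmaj (hps.trans hqs.symm)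
    fun a => ∑ π ∈ A, W a π
  have hcard : #(A.map (Equiv.mulLeft σ⁻¹).toEmbedding) = k := by simpa using hA
  calc ∑ π ∈ A, ∑ a, p a * W a π = ∑ a, p a * ∑ π ∈ A, W a π := by
        simp_rw [mul_sum]; exact sum_comm
    _ ≤ ∑ a, q a * ∑ π ∈ A, W (σ a) π := hσ
    _ = ∑ π ∈ A.map (Equiv.mulLeft σ⁻¹).toEmbedding, ∑ a, q a * W a π := by
        simp_rw [hEquiv, sum_map, mul_sum]; exact sum_comm
    _ ≤ _ := le_topSum _ hcard

/-- The Claim in the proof of Theorem 5.4: equivariance of `Ŵ` under permutations implies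
that `π ↦ ∑ₐ p(a) Ŵ(a, ω(π))` is monotone for majorization of the coefficient vectors. -/
theorem stmt18 {K : ℕ} (W : Fin K → Equiv.Perm (Fin K) → ℝ) (hW : ∀ a π, 0 ≤ W a π)
    (hEquiv : ∀ (a : Fin K) (σ π : Equiv.Perm (Fin K)), W (σ a) π = W a (σ⁻¹ * π))
    (p q : Fin K → ℝ) (hp : ∀ a, 0 ≤ p a) (hq : ∀ a, 0 ≤ q a)
    (hps : ∑ a, p a = 1) (hqs : ∑ a, q a = 1)
    (hmaj : MajorizedBy p q) :
    MajorizedBy (fun π : Equiv.Perm (Fin K) => ∑ a, p a * W a π)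
      (fun π : Equiv.Perm (Fin K) => ∑ a, q a * W a π) :=
  stmt18_general W hEquiv p q hps hqs hmaj
end
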